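/- The formal system ATM proves the sentence ¬¬A[⊥̇]; that is, ATM proves that the falsum sentence is not not assertible. -/
import Mathlib


namespace ATM

/-- Terms of ATM: built from ⊥̇ and constants L₁, L₂, … by the dotted
connectives ∧̇, ∨̇, →̇ and the dotted predicates Ȧ[·], Ṫ[·], Ṁ[·]. -/
inductive Term : Type
  | bot  : Term
  | L    : ℕ → Term
  | and  : Term → Term → Term
  | or   : Term → Term → Term
  | imp  : Term → Term → Term
  | A    : Term → Term
  | T    : Term → Term
  | M    : Term → Term

/-- Sentences of ATM: built from ⊥, A[t], T[t], M[t] by ∧, ∨, →. -/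
inductive Sentence : Type
  | bot  : Sentence
  | A    : Term → Sentence
  | T    : Term → Sentence
  | M    : Term → Sentence
  | and  : Sentence → Sentence → Sentence
  | or   : Sentence → Sentence → Sentence
  | imp  : Sentence → Sentence → Sentence

/-- ¬̇t abbreviates t →̇ ⊥̇. -/
def Term.neg (t : Term) : Term := Term.imp t Term.bot

/-- s ↔̇ t abbreviates (s →̇ t) ∧̇ (t →̇ s). -/
def Term.iff (s t : Term) : Term := Term.and (Term.imp s t) (Term.imp t s)

/-- ¬φ abbreviates φ → ⊥. -/
def Sentence.neg (φ : Sentence) : Sentence := Sentence.imp φ Sentence.bot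

/-- φ ↔ ψ abbreviates (φ → ψ) ∧ (ψ → φ). -/
def Sentence.iff (φ ψ : Sentence) : Sentence :=
  Sentence.and (Sentence.imp φ ψ) (Sentence.imp ψ φ)

/-- The canonical term φ̇ of a sentence φ, obtained by dotting every symbol. -/
def Sentence.dot : Sentence → Term
  | Sentence.bot     => Term.bot
  | Sentence.A t     => Term.A t
  | Sentence.T t     => Term.T t
  | Sentence.M t     => Term.M t
  | Sentence.and φ ψ => Term.and φ.dot ψ.dot
  | Sentence.or φ ψ  => Term.or φ.dot ψ.dot
  | Sentence.imp φ ψ => Term.imp φ.dot ψ.dot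

/-- Evaluation t̂ of a term t to a sentence, relative to an assignment
θ of a sentence θᵢ to each constant Lᵢ.  (The θᵢ may be chosen in any
manner; the theorems below hypothesize θ₁ = ¬T[L₁] and θ₂ = ¬A[L₂].) -/
def Term.eval (θ : ℕ → Sentence) : Term → Sentence
  | Term.bot     => Sentence.bot
  | Term.L i     => θ i
  | Term.A t     => Sentence.A t
  | Term.T t     => Sentence.T t
  | Term.M t     => Sentence.M t
  | Term.and s t => Sentence.and (s.eval θ) (t.eval θ)
  | Term.or s t  => Sentence.or (s.eval θ) (t.eval θ)
  | Term.imp s t => Sentence.imp (s.eval θ) (t.eval θ)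

/-- Grounded sentences: the smallest set of sentences containing ⊥, all A[t]
and all M[t], closed under ∧, ∨, →, and containing T[t] whenever t̂ is in
the set. -/
inductive Grounded (θ : ℕ → Sentence) : Sentence → Prop
  | bot : Grounded θ Sentence.bot
  | A (t : Term) : Grounded θ (Sentence.A t)
  | M (t : Term) : Grounded θ (Sentence.M t)
  | and {φ ψ : Sentence} : Grounded θ φ → Grounded θ ψ → Grounded θ (Sentence.and φ ψ)
  | or {φ ψ : Sentence} : Grounded θ φ → Grounded θ ψ → Grounded θ (Sentence.or φ ψ)
  | imp {φ ψ : Sentence} : Grounded θ φ → Grounded θ ψ → Grounded θ (Sentence.imp φ ψ)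
  | T {t : Term} : Grounded θ (t.eval θ) → Grounded θ (Sentence.T t)

/-- `HilbertAxT s t u a` : the term `a` is the instance `Ȧ(s,t,u)` at the
terms `s`, `t`, `u` of one of the axiom schemes `A` of a fixed standard
Hilbert-style axiomatization of intuitionistic propositional logic. -/
inductive HilbertAxT : Term → Term → Term → Term → Prop
  | imp1 (s t u : Term) : HilbertAxT s t u (Term.imp s (Term.imp t s))
  | imp2 (s t u : Term) : HilbertAxT s t u
      (Term.imp (Term.imp s (Term.imp t u))
        (Term.imp (Term.imp s t) (Term.imp s u)))
  | andE1 (s t u : Term) : HilbertAxT s t u (Term.imp (Term.and s t) s)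
  | andE2 (s t u : Term) : HilbertAxT s t u (Term.imp (Term.and s t) t)
  | andI (s t u : Term) : HilbertAxT s t u (Term.imp s (Term.imp t (Term.and s t)))
  | orI1 (s t u : Term) : HilbertAxT s t u (Term.imp s (Term.or s t))
  | orI2 (s t u : Term) : HilbertAxT s t u (Term.imp t (Term.or s t))
  | orE (s t u : Term) : HilbertAxT s t u
      (Term.imp (Term.imp s u)
        (Term.imp (Term.imp t u) (Term.imp (Term.or s t) u)))
  | exfalso (s t u : Term) : HilbertAxT s t u (Term.imp Term.bot s)

/-- Theorems of ATM: the axioms (logical axioms and nonlogical schemes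
(1)–(9)) closed under the three deduction rules (conjunction, modus
ponens, release). -/
inductive Thm (θ : ℕ → Sentence) : Sentence → Prop
  -- logical axioms: (M[s] ∧ M[t] ∧ M[u]) → A[Ȧ(s,t,u)]
  | logical {s t u a : Term} (h : HilbertAxT s t u a) :
      Thm θ (Sentence.imp
        (Sentence.and (Sentence.and (Sentence.M s) (Sentence.M t)) (Sentence.M u))
        (Sentence.A a))
  -- (1) M[t] for t̂ grounded
  | ax1 {t : Term} (h : Grounded θ (t.eval θ)) : Thm θ (Sentence.M t)
  -- (2) (M[s] ∧ M[t]) ↔ M[s ∧̇ t] ↔ M[s ∨̇ t] ↔ M[s →̇ t]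
  | ax2and (s t : Term) :
      Thm θ (Sentence.iff (Sentence.and (Sentence.M s) (Sentence.M t))
        (Sentence.M (Term.and s t)))
  | ax2or (s t : Term) :
      Thm θ (Sentence.iff (Sentence.and (Sentence.M s) (Sentence.M t))
        (Sentence.M (Term.or s t)))
  | ax2imp (s t : Term) :
      Thm θ (Sentence.iff (Sentence.and (Sentence.M s) (Sentence.M t))
        (Sentence.M (Term.imp s t)))
  -- (3) A[t] → M[t]
  | ax3 (t : Term) : Thm θ (Sentence.imp (Sentence.A t) (Sentence.M t))
  -- (4) (A[s] ∧ A[t]) → A[s ∧̇ t]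
  | ax4 (s t : Term) :
      Thm θ (Sentence.imp (Sentence.and (Sentence.A s) (Sentence.A t))
        (Sentence.A (Term.and s t)))
  -- (5) (A[s] ∧ A[s →̇ t]) → A[t]
  | ax5 (s t : Term) :
      Thm θ (Sentence.imp (Sentence.and (Sentence.A s) (Sentence.A (Term.imp s t)))
        (Sentence.A t))
  -- (6) M[t] → A[t →̇ Ȧ[t]]
  | ax6 (t : Term) :
      Thm θ (Sentence.imp (Sentence.M t) (Sentence.A (Term.imp t (Term.A t))))
  -- (7) M[t] → A[t ↔̇ Ṫ[t]]
  | ax7 (t : Term) :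
      Thm θ (Sentence.imp (Sentence.M t) (Sentence.A (Term.iff t (Term.T t))))
  -- (8) ¬M[t] → A[¬̇Ṫ[t]]
  | ax8 (t : Term) :
      Thm θ (Sentence.imp (Sentence.neg (Sentence.M t))
        (Sentence.A (Term.neg (Term.T t))))
  -- (9) M[t] → A[t ↔̇ t'] whenever t̂ = t̂'
  | ax9 {t t' : Term} (h : t.eval θ = t'.eval θ) :
      Thm θ (Sentence.imp (Sentence.M t) (Sentence.A (Term.iff t t')))
  -- deduction rules
  | conj {φ ψ : Sentence} : Thm θ φ → Thm θ ψ → Thm θ (Sentence.and φ ψ)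
  | mp {φ ψ : Sentence} : Thm θ φ → Thm θ (Sentence.imp φ ψ) → Thm θ ψ
  | release {t : Term} : Thm θ (Sentence.A t) → Thm θ (t.eval θ)

/-- θ₁ is the classical liar sentence ¬T[L₁]. -/
def liar1 : Sentence := Sentence.neg (Sentence.T (Term.L 1))

/-- θ₂ is the assertible liar sentence ¬A[L₂]. -/
def liar2 : Sentence := Sentence.neg (Sentence.A (Term.L 2))



section Aux

variable {θ : ℕ → Sentence}

/-- Evaluation undoes dotting. -/
lemma eval_dot (θ : ℕ → Sentence) (φ : Sentence) : φ.dot.eval θ = φ := by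
  induction φ <;> simp [Sentence.dot, Term.eval, *]

/-- Internal modus ponens via axiom (5). -/
lemma pmp {s t : Term} (h1 : Thm θ (Sentence.A (Term.imp s t)))
    (h2 : Thm θ (Sentence.A s)) : Thm θ (Sentence.A t) :=
  Thm.mp (Thm.conj h2 h1) (Thm.ax5 s t)

/-- Instances of logical axioms, given meaningfulness of the parameters. -/
lemma axInst {s t u a : Term} (Ms : Thm θ (Sentence.M s)) (Mt : Thm θ (Sentence.M t))
    (Mu : Thm θ (Sentence.M u)) (h : HilbertAxT s t u a) : Thm θ (Sentence.A a) :=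
  Thm.mp (Thm.conj (Thm.conj Ms Mt) Mu) (Thm.logical h)

lemma Mbot : Thm θ (Sentence.M Term.bot) := Thm.ax1 Grounded.bot

lemma Mdot {φ : Sentence} (h : Grounded θ φ) : Thm θ (Sentence.M φ.dot) :=
  Thm.ax1 (by rw [eval_dot]; exact h)

/-- External conjunction elimination (left), for grounded sentences. -/
lemma and_elim1 {φ ψ : Sentence} (gφ : Grounded θ φ) (gψ : Grounded θ ψ)
    (h : Thm θ (Sentence.and φ ψ)) : Thm θ φ := by
  have hP : Thm θ (Sentence.A (Term.imp (Term.and φ.dot ψ.dot) φ.dot)) :=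
    axInst (Mdot gφ) (Mdot gψ) Mbot (HilbertAxT.andE1 _ _ _)
  have hrel := Thm.release hP
  simp only [Term.eval, eval_dot] at hrel
  exact Thm.mp h hrel

lemma M_imp {s t : Term} (Ms : Thm θ (Sentence.M s)) (Mt : Thm θ (Sentence.M t)) :
    Thm θ (Sentence.M (Term.imp s t)) := by
  have fwd := and_elim1
    (Grounded.imp (Grounded.and (Grounded.M s) (Grounded.M t)) (Grounded.M _))
    (Grounded.imp (Grounded.M _) (Grounded.and (Grounded.M s) (Grounded.M t)))
    (Thm.ax2imp (θ := θ) s t)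
  exact Thm.mp (Thm.conj Ms Mt) fwd

lemma M_and {s t : Term} (Ms : Thm θ (Sentence.M s)) (Mt : Thm θ (Sentence.M t)) :
    Thm θ (Sentence.M (Term.and s t)) := by
  have fwd := and_elim1
    (Grounded.imp (Grounded.and (Grounded.M s) (Grounded.M t)) (Grounded.M _))
    (Grounded.imp (Grounded.M _) (Grounded.and (Grounded.M s) (Grounded.M t)))
    (Thm.ax2and (θ := θ) s t)
  exact Thm.mp (Thm.conj Ms Mt) fwd

/-- Internal composition rule. -/
lemma compP {p q r : Term} (Mp : Thm θ (Sentence.M p)) (Mq : Thm θ (Sentence.M q))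
    (Mr : Thm θ (Sentence.M r))
    (hqr : Thm θ (Sentence.A (Term.imp q r)))
    (hpq : Thm θ (Sentence.A (Term.imp p q))) :
    Thm θ (Sentence.A (Term.imp p r)) := by
  have h1 : Thm θ (Sentence.A (Term.imp p (Term.imp q r))) :=
    pmp (axInst (M_imp Mq Mr) Mp Mbot (HilbertAxT.imp1 _ _ _)) hqr
  have hS := axInst Mp Mq Mr (HilbertAxT.imp2 p q r)
  exact pmp (pmp hS h1) hpq

/-- Internal exchange rule. -/
lemma flipP {p q r : Term} (Mp : Thm θ (Sentence.M p)) (Mq : Thm θ (Sentence.M q))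
    (Mr : Thm θ (Sentence.M r))
    (h : Thm θ (Sentence.A (Term.imp p (Term.imp q r)))) :
    Thm θ (Sentence.A (Term.imp q (Term.imp p r))) := by
  have h1 : Thm θ (Sentence.A (Term.imp (Term.imp p q) (Term.imp p r))) :=
    pmp (axInst Mp Mq Mr (HilbertAxT.imp2 p q r)) h
  have hK : Thm θ (Sentence.A (Term.imp q (Term.imp p q))) :=
    axInst Mq Mp Mbot (HilbertAxT.imp1 q p Term.bot)
  exact compP Mq (M_imp Mp Mq) (M_imp Mp Mr) h1 hK

/-- Internal B combinator: (b → c) → ((a → b) → (a → c)). -/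
lemma provB {a b c : Term} (Ma : Thm θ (Sentence.M a)) (Mb : Thm θ (Sentence.M b))
    (Mc : Thm θ (Sentence.M c)) :
    Thm θ (Sentence.A (Term.imp (Term.imp b c)
      (Term.imp (Term.imp a b) (Term.imp a c)))) := by
  have hS := axInst Ma Mb Mc (HilbertAxT.imp2 a b c)
  have hK : Thm θ (Sentence.A (Term.imp (Term.imp b c) (Term.imp a (Term.imp b c)))) :=
    axInst (M_imp Mb Mc) Ma Mbot (HilbertAxT.imp1 (Term.imp b c) a Term.bot)
  exact compP (M_imp Mb Mc) (M_imp Ma (M_imp Mb Mc))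
    (M_imp (M_imp Ma Mb) (M_imp Ma Mc)) hS hK

/-- Internal flipped B combinator: (a → b) → ((b → c) → (a → c)). -/
lemma provB' {a b c : Term} (Ma : Thm θ (Sentence.M a)) (Mb : Thm θ (Sentence.M b))
    (Mc : Thm θ (Sentence.M c)) :
    Thm θ (Sentence.A (Term.imp (Term.imp a b)
      (Term.imp (Term.imp b c) (Term.imp a c)))) :=
  flipP (M_imp Mb Mc) (M_imp Ma Mb) (M_imp Ma Mc) (provB Ma Mb Mc)

end Aux

theorem atm_proves_not_not_assert_falsum (θ : ℕ → Sentence)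
    (h1 : θ 1 = liar1) (h2 : θ 2 = liar2) :
    Thm θ (Sentence.neg (Sentence.neg (Sentence.A Term.bot))) := by
  classical
  set lam := Term.L 2 with hlam
  set al := Term.A lam with hal
  set anl := Term.A (Term.neg lam) with hanl
  set ab := Term.A Term.bot with hab
  -- meaningfulness facts
  have glam : Grounded θ (lam.eval θ) := by
    have : lam.eval θ = Sentence.imp (Sentence.A (Term.L 2)) Sentence.bot := by
      simp [hlam, Term.eval, h2, liar2, Sentence.neg]
    rw [this]
    exact Grounded.imp (Grounded.A _) Grounded.bot
  have Mlam : Thm θ (Sentence.M lam) := Thm.ax1 glam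
  have Mal : Thm θ (Sentence.M al) := Thm.ax1 (Grounded.A lam)
  have Manl : Thm θ (Sentence.M anl) := Thm.ax1 (Grounded.A _)
  have Mab : Thm θ (Sentence.M ab) := Thm.ax1 (Grounded.A _)
  -- Step A: A[λ ↔̇ ¬̇Ȧ[λ]] by axiom (9)
  have heq : lam.eval θ = (Term.neg (Term.A lam)).eval θ := by
    simp [hlam, Term.eval, h2, liar2, Sentence.neg, Term.neg]
  have stepA : Thm θ (Sentence.A (Term.iff lam (Term.neg al))) :=
    Thm.mp Mlam (Thm.ax9 heq)
  -- Step B: A[λ →̇ ¬̇Ȧ[λ]]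
  have Mnal : Thm θ (Sentence.M (Term.neg al)) := M_imp Mal Mbot
  have stepB : Thm θ (Sentence.A (Term.imp lam (Term.neg al))) := by
    have hE := axInst (θ := θ) (M_imp Mlam Mnal) (M_imp Mnal Mlam) Mbot
      (HilbertAxT.andE1 (Term.imp lam (Term.neg al)) (Term.imp (Term.neg al) lam) Term.bot)
    exact pmp hE stepA
  -- Step C: A[λ →̇ Ȧ[λ]] by axiom (6)
  have stepC : Thm θ (Sentence.A (Term.imp lam al)) := Thm.mp Mlam (Thm.ax6 lam)
  -- Step D: A[¬̇λ]
  have stepD : Thm θ (Sentence.A (Term.neg lam)) := by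
    have hS := axInst (θ := θ) Mlam Mal Mbot (HilbertAxT.imp2 lam al Term.bot)
    exact pmp (pmp hS stepB) stepC
  -- T1: ¬¬A[λ] (released)
  have T1 : Thm θ (Sentence.imp (Sentence.imp (Sentence.A lam) Sentence.bot) Sentence.bot) := by
    have := Thm.release stepD
    simpa [Term.neg, Term.eval, hlam, h2, liar2, Sentence.neg] using this
  -- T3: axiom (5) instance
  have T3 : Thm θ (Sentence.imp
      (Sentence.and (Sentence.A lam) (Sentence.A (Term.neg lam))) (Sentence.A Term.bot)) :=
    Thm.ax5 lam Term.bot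
  -- W1: A[λ] → (A[λ] ∧ A[¬̇λ])
  have W1 : Thm θ (Sentence.imp (Sentence.A lam)
      (Sentence.and (Sentence.A lam) (Sentence.A (Term.neg lam)))) := by
    have hand : Thm θ (Sentence.A (Term.imp anl (Term.imp al (Term.and al anl)))) :=
      flipP Mal Manl (M_and Mal Manl) (axInst Mal Manl Mbot (HilbertAxT.andI al anl Term.bot))
    have hrel := Thm.release hand
    simp only [Term.eval, hal, hanl] at hrel
    exact Thm.mp stepD hrel
  -- G1: A[λ] → A[⊥̇]
  have G1 : Thm θ (Sentence.imp (Sentence.A lam) (Sentence.A Term.bot)) := by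
    have hB := provB (θ := θ) (a := al) (b := Term.and al anl) (c := ab)
      Mal (M_and Mal Manl) Mab
    have hrel := Thm.release hB
    simp only [Term.eval, hal, hanl, hab] at hrel
    exact Thm.mp W1 (Thm.mp T3 hrel)
  -- C1: ¬A[⊥̇] → ¬A[λ]
  have C1 : Thm θ (Sentence.imp (Sentence.imp (Sentence.A Term.bot) Sentence.bot)
      (Sentence.imp (Sentence.A lam) Sentence.bot)) := by
    have hB := provB' (θ := θ) (a := al) (b := ab) (c := Term.bot) Mal Mab Mbot
    have hrel := Thm.release hB
    simp only [Term.eval, hal, hab] at hrel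
    exact Thm.mp G1 hrel
  -- Final: ¬¬A[⊥̇]
  have hB := provB' (θ := θ) (a := Term.imp ab Term.bot) (b := Term.imp al Term.bot)
    (c := Term.bot) (M_imp Mab Mbot) (M_imp Mal Mbot) Mbot
  have hrel := Thm.release hB
  simp only [Term.eval, hal, hab] at hrel
  exact Thm.mp T1 (Thm.mp C1 hrel)


end ATM
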